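/- Fix v ∈ R^k, data x_1,…,x_n ∈ R^d and labels y_1,…,y_n ∈ R. If a matrix W̃ ∈ R^{k×d} satisfies (1/n) Σ_{i=1}^n (x_i^T W̃^T diag(v) W̃ x_i − y_i) x_i x_i^T = 0 (the zero d×d matrix), then W̃ is a global minimizer of L, i.e., L(W) ≥ L(W̃) for every W ∈ R^{k×d}. -/

import Mathlib

/-!
The loss depends on `W` only through `M = Wᵀ diag(v) W`, and as a function of `M` it is a
least-squares loss, hence a quadratic whose exact expansion around `M̃ = W̃ᵀ diag(v) W̃` has a
linear term `tr ((M - M̃) G)`, with `G` the matrix assumed to vanish, and a nonnegative quadratic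
term `∑ i, (xᵢᵀ (M - M̃) xᵢ)²`.
-/

open MeasureTheory ProbabilityTheory Matrix Real

noncomputable section

/-- Euclidean norm of a vector. -/
def euclNorm {n : Type*} [Fintype n] (x : n → ℝ) : ℝ :=
  Real.sqrt (∑ i, x i ^ 2)

/-- Maximum singular value (operator norm) of a matrix. -/
def sigmaMax {m n : Type*} [Fintype m] [Fintype n] (A : Matrix m n ℝ) : ℝ :=
  sSup ((fun x => euclNorm (A.mulVec x)) '' {x : n → ℝ | euclNorm x = 1})

/-- Minimum singular value of a matrix. -/
def sigmaMin {m n : Type*} [Fintype m] [Fintype n] (A : Matrix m n ℝ) : ℝ :=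
  sInf ((fun x => euclNorm (A.mulVec x)) '' {x : n → ℝ | euclNorm x = 1})

/-- Frobenius norm of a matrix. -/
def frobNorm {m n : Type*} [Fintype m] [Fintype n] (A : Matrix m n ℝ) : ℝ :=
  Real.sqrt (∑ i, ∑ j, A i j ^ 2)

/-- Nuclear norm of a matrix: the trace of `sqrt (Aᵀ A)`, i.e. the sum of singular values. -/
def nuclearNorm {m n : Type*} [Fintype m] [Fintype n] [DecidableEq n]
    (A : Matrix m n ℝ) : ℝ :=
  ((Matrix.posSemidef_conjTranspose_mul_self A).1.eigenvectorUnitary.1 *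
    Matrix.diagonal (Real.sqrt ∘ (Matrix.posSemidef_conjTranspose_mul_self A).1.eigenvalues) *
    (star (Matrix.posSemidef_conjTranspose_mul_self A).1.eigenvectorUnitary : Matrix n n ℝ)).trace

/-- Khatri-Rao product: columnwise Kronecker product. -/
def khatriRao {m n p : Type*} (A : Matrix m p ℝ) (B : Matrix n p ℝ) : Matrix (m × n) p ℝ :=
  Matrix.of fun ij l => A ij.1 l * B ij.2 l

/-- Standard Gaussian measure `N(0, I_d)` on `ℝ^d`. -/
def stdGaussian (d : ℕ) : Measure (Fin d → ℝ) :=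
  Measure.pi fun _ => gaussianReal 0 1

attribute [local instance] Matrix.frobeniusNormedAddCommGroup Matrix.frobeniusNormedSpace

namespace Matrix

variable {ι m R : Type*} [Fintype ι] [Fintype m]

theorem dotProduct_mulVec_self_eq_trace_mul_vecMulVec [CommSemiring R]
    (A : Matrix m m R) (x : m → R) : x ⬝ᵥ A *ᵥ x = trace (A * vecMulVec x x) := by
  rw [mul_vecMulVec, trace_vecMulVec, dotProduct_comm]

theorem sum_mul_dotProduct_mulVec_eq_trace_mul_sum [CommSemiring R]
    (r : ι → R) (x : ι → m → R) (A : Matrix m m R) :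
    ∑ i, r i * (x i ⬝ᵥ A *ᵥ x i) = trace (A * ∑ i, r i • vecMulVec (x i) (x i)) := by
  simp only [Matrix.mul_sum, mul_smul_comm, trace_sum, trace_smul, smul_eq_mul,
    dotProduct_mulVec_self_eq_trace_mul_vecMulVec]

theorem sum_sq_dotProduct_mulVec_sub_eq [CommRing R]
    (x : ι → m → R) (y : ι → R) (M M' : Matrix m m R) :
    ∑ i, (x i ⬝ᵥ M' *ᵥ x i - y i) ^ 2 =
      ∑ i, (x i ⬝ᵥ M *ᵥ x i - y i) ^ 2 +
        2 * trace ((M' - M) * ∑ i, (x i ⬝ᵥ M *ᵥ x i - y i) • vecMulVec (x i) (x i)) +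
        ∑ i, (x i ⬝ᵥ (M' - M) *ᵥ x i) ^ 2 := by
  rw [← sum_mul_dotProduct_mulVec_eq_trace_mul_sum, Finset.mul_sum, ← Finset.sum_add_distrib,
    ← Finset.sum_add_distrib]
  refine Finset.sum_congr rfl fun i _ => ?_
  simp only [sub_mulVec, dotProduct_sub]
  ring

end Matrix

theorem stmt5_general (d k n : ℕ)
    (v : Fin k → ℝ) (x : Fin n → Fin d → ℝ) (y : Fin n → ℝ)
    (L : Matrix (Fin k) (Fin d) ℝ → ℝ)
    (hL : ∀ W : Matrix (Fin k) (Fin d) ℝ,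
      L W = (1 / (2 * (n : ℝ))) *
        ∑ i, (x i ⬝ᵥ (Wᵀ * Matrix.diagonal v * W).mulVec (x i) - y i) ^ 2)
    (Wt : Matrix (Fin k) (Fin d) ℝ)
    (hstat : (1 / (n : ℝ)) •
        ∑ i, (x i ⬝ᵥ (Wtᵀ * Matrix.diagonal v * Wt).mulVec (x i) - y i) •
          Matrix.vecMulVec (x i) (x i) = (0 : Matrix (Fin d) (Fin d) ℝ)) :
    ∀ W : Matrix (Fin k) (Fin d) ℝ, L Wt ≤ L W := by
  intro W
  set M := Wtᵀ * diagonal v * Wt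
  set A := Wᵀ * diagonal v * W - M
  rw [hL, hL, sum_sq_dotProduct_mulVec_sub_eq x y M (Wᵀ * diagonal v * W)]
  set G := ∑ i, (x i ⬝ᵥ M *ᵥ x i - y i) • vecMulVec (x i) (x i)
  have hcross : 1 / (2 * (n : ℝ)) * (2 * trace (A * G)) = 0 := by
    calc 1 / (2 * (n : ℝ)) * (2 * trace (A * G)) = trace (A * ((1 / (n : ℝ)) • G)) := by
          rw [mul_smul_comm, trace_smul, smul_eq_mul]; ring
      _ = 0 := by rw [hstat, Matrix.mul_zero, trace_zero]
  rw [mul_add, mul_add, hcross, add_zero]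
  exact le_add_of_nonneg_right (by positivity)

/-- if the weighted sum of outer products `(1/n) Σ_i r_i x_i x_iᵀ` vanishes at `W̃`,
then `W̃` is a global minimizer of the quadratic-activation loss. -/
theorem stmt5 (d k n : ℕ) (hn : 0 < n)
    (v : Fin k → ℝ) (x : Fin n → Fin d → ℝ) (y : Fin n → ℝ)
    (L : Matrix (Fin k) (Fin d) ℝ → ℝ)
    (hL : ∀ W : Matrix (Fin k) (Fin d) ℝ,
      L W = (1 / (2 * (n : ℝ))) *
        ∑ i, (x i ⬝ᵥ (Wᵀ * Matrix.diagonal v * W).mulVec (x i) - y i) ^ 2)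
    (Wt : Matrix (Fin k) (Fin d) ℝ)
    (hstat : (1 / (n : ℝ)) •
        ∑ i, (x i ⬝ᵥ (Wtᵀ * Matrix.diagonal v * Wt).mulVec (x i) - y i) •
          Matrix.vecMulVec (x i) (x i) = (0 : Matrix (Fin d) (Fin d) ℝ)) :
    ∀ W : Matrix (Fin k) (Fin d) ℝ, L Wt ≤ L W :=
  stmt5_general d k n v x y L hL Wt hstat
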